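/- Let v_1, …, v_r be vectors in ℝ^n (indices taken modulo r, r ≥ 1) and let w ∈ ℝ^n. Suppose there exist positive reals a_1, …, a_r and b_1, …, b_r such that w = -b_i v_i + a_i v_{i+1} for every i ∈ {1, …, r}. Then w and v_1 are linearly dependent. -/

import Mathlib

/-!
Solving the relations for `vᵢ₊₁` and going once around the cycle gives `α v₁ = β v₁ + γ w`.
Positivity of the `aᵢ, bᵢ` keeps `α` and `γ` positive along the way, and `γ ≠ 0` puts `w` on
the line through `v₁`.
-/

section Chain

variable {K M : Type*} [AddCommGroup M] {u : ℕ → M} {w : M} {a b : ℕ → K}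

theorem exists_pos_smul_succ_eq_smul_zero_add_pos_smul [CommRing K] [LinearOrder K]
    [IsStrictOrderedRing K] [Module K M] (ha : ∀ k, 0 < a k) (hb : ∀ k, 0 ≤ b k)
    (hw : ∀ k, w = -b k • u k + a k • u (k + 1)) (m : ℕ) :
    ∃ α β γ : K, 0 < α ∧ 0 < γ ∧ α • u (m + 1) = β • u 0 + γ • w := by
  induction m with
  | zero => exact ⟨a 0, b 0, 1, ha 0, one_pos, by rw [hw 0]; module⟩
  | succ m ih =>
    obtain ⟨α, β, γ, hα, hγ, hrel⟩ := ih
    refine ⟨a (m + 1) * α, b (m + 1) * β, α + b (m + 1) * γ, mul_pos (ha _) hα,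
      add_pos_of_pos_of_nonneg hα (mul_nonneg (hb _) hγ.le), ?_⟩
    have hstep : a (m + 1) • u (m + 1 + 1) = w + b (m + 1) • u (m + 1) := by
      rw [hw (m + 1)]; module
    calc (a (m + 1) * α) • u (m + 1 + 1) = α • (a (m + 1) • u (m + 1 + 1)) := by
          rw [smul_smul, mul_comm]
      _ = α • w + b (m + 1) • (α • u (m + 1)) := by rw [hstep]; module
      _ = _ := by rw [hrel]; module

theorem mem_span_singleton_of_periodic [Field K] [LinearOrder K] [IsStrictOrderedRing K]
    [Module K M] (ha : ∀ k, 0 < a k) (hb : ∀ k, 0 ≤ b k)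
    (hw : ∀ k, w = -b k • u k + a k • u (k + 1)) {r : ℕ} (hr : 0 < r) (hper : u r = u 0) :
    w ∈ K ∙ u 0 := by
  obtain ⟨α, β, γ, -, hγ, hrel⟩ :=
    exists_pos_smul_succ_eq_smul_zero_add_pos_smul ha hb hw (r - 1)
  rw [Nat.sub_add_cancel hr, hper] at hrel
  have hγw : γ • w = (α - β) • u 0 := by rw [sub_smul, hrel]; module
  refine Submodule.mem_span_singleton.mpr ⟨γ⁻¹ * (α - β), ?_⟩
  rw [mul_smul, ← hγw, smul_smul, inv_mul_cancel₀ hγ.ne', one_smul]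

end Chain

open Fin.NatCast in
/-- If `w = -bᵢ • vᵢ + aᵢ • v_{i+1}` (indices mod `r`, `r ≥ 1`) with all
`aᵢ, bᵢ > 0`, then `w` and `v₁` are linearly dependent. -/
theorem stmt_2 {n r : ℕ} [NeZero r] (v : Fin r → (Fin n → ℝ))
    (w : Fin n → ℝ) (a b : Fin r → ℝ)
    (ha : ∀ i, 0 < a i) (hb : ∀ i, 0 < b i)
    (hw : ∀ i : Fin r, w = -(b i) • v i + (a i) • v (i + 1)) :
    ¬ LinearIndependent ℝ ![w, v 0] := by
  have hw' : ∀ k : ℕ, w = -b k • v k + a k • v ((k + 1 : ℕ) : Fin r) := fun k => by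
    rw [Nat.cast_succ]; exact hw k
  have hspan : w ∈ ℝ ∙ v 0 :=
    mem_span_singleton_of_periodic (u := fun k : ℕ => v k) (fun k => ha k) (fun k => (hb k).le)
      hw' (Nat.pos_of_neZero r) (by simp only [Fin.natCast_self, Nat.cast_zero])
  obtain ⟨c, hc⟩ := Submodule.mem_span_singleton.mp hspan
  exact fun hli => (linearIndependent_fin2.mp hli).2 c hc
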